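/- arXiv:0707.0813 — 3 statements merged into one kernel-verified Lean document; each statement's English description precedes it below -/
import Mathlib

section
/- Let q ≥ 1 be a real number, Λ a finite set, φ and ψ nonnegative real-valued functions on Λ, and z* ∈ Λ a point where φ attains its maximum. Then (φ(z*) + Σ_{z∈Λ} ψ(z))^q + Σ_{z∈Λ, z≠z*} φ(z)^q ≥ Σ_{z∈Λ} (φ(z) + ψ(z))^q. -/
/-!
For a convex `f`, the increment `f (a + t) - f a` grows with `a`. Each summand
`(φ z + ψ z) ^ q - φ z ^ q` is therefore at most the increment of `x ↦ x ^ q` by `ψ z` at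
`φ z* + ∑_{w before z} ψ w ≥ φ z`, and these increments telescope to
`(φ z* + ∑ ψ) ^ q - φ z* ^ q`.
-/

section

open Finset Set

variable {𝕜 : Type*} [Field 𝕜] [LinearOrder 𝕜] [IsStrictOrderedRing 𝕜] {f : 𝕜 → 𝕜}

theorem ConvexOn.map_add_sub_map_le_of_le {s : Set 𝕜} (hf : ConvexOn 𝕜 s f) {a b t : 𝕜}
    (ha : a ∈ s) (hbt : b + t ∈ s) (hab : a ≤ b) (ht : 0 ≤ t) :
    f (a + t) - f a ≤ f (b + t) - f b := by
  rcases ht.eq_or_lt with rfl | ht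
  · simp
  have hat : a + t ∈ s := hf.1.ordConnected.out ha hbt ⟨by linarith, by linarith⟩
  have hb : b ∈ s := hf.1.ordConnected.out ha hbt ⟨hab, by linarith⟩
  -- compare both increments with the secant over `[a, b + t]`
  have h₁ := hf.secant_mono ha hat hbt (by linarith) (by linarith) (by linarith)
  have h₂ := hf.secant_mono hbt ha hb (by linarith) (by linarith) hab
  rw [add_sub_cancel_left] at h₁
  rw [show b - (b + t) = -t by ring, div_neg, ← neg_div, neg_sub,
    ← neg_sub (f (b + t)), ← neg_sub (b + t) a, neg_div_neg_eq] at h₂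
  exact (div_le_div_iff_of_pos_right ht).1 (h₁.trans h₂)

theorem ConvexOn.sum_map_add_sub_map_le {ι : Type*} (hf : ConvexOn 𝕜 (Ici 0) f) (x y : ι → 𝕜)
    (M : 𝕜) (Λ : Finset ι) (hx : ∀ z ∈ Λ, 0 ≤ x z) (hy : ∀ z ∈ Λ, 0 ≤ y z)
    (hxM : ∀ z ∈ Λ, x z ≤ M) :
    ∑ z ∈ Λ, (f (x z + y z) - f (x z)) ≤ f (M + ∑ z ∈ Λ, y z) - f M := by
  classical
  induction Λ using Finset.induction_on with
  | empty => simp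
  | insert a Λ ha ih =>
    simp only [Finset.mem_insert, forall_eq_or_imp] at hx hy hxM
    have hΛ : 0 ≤ ∑ z ∈ Λ, y z := Finset.sum_nonneg hy.2
    have hstep := hf.map_add_sub_map_le_of_le (a := x a) (b := M + ∑ z ∈ Λ, y z) (t := y a) hx.1
      (by simp only [Set.mem_Ici]; linarith [hx.1, hxM.1, hy.1]) (by linarith [hxM.1]) hy.1
    rw [sum_insert ha, sum_insert ha, ← add_assoc, add_right_comm M]
    linarith [ih hx.2 hy.2 hxM.2]

end

/-- If `q ≥ 1`, `φ, ψ` are nonnegative functions on a finite set `Λ`, and `z*` is a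
point of `Λ` where `φ` attains its maximum, then
`(φ z* + ∑_{z∈Λ} ψ z)^q + ∑_{z∈Λ, z≠z*} (φ z)^q ≥ ∑_{z∈Λ} (φ z + ψ z)^q`. -/
theorem stmt0 {α : Type*} [DecidableEq α] (Λ : Finset α) (φ ψ : α → ℝ) (q : ℝ)
    (hq : 1 ≤ q) (hφ : ∀ z, 0 ≤ φ z) (hψ : ∀ z, 0 ≤ ψ z)
    (zs : α) (hzs : zs ∈ Λ) (hmax : ∀ z ∈ Λ, φ z ≤ φ zs) :
    ∑ z ∈ Λ, (φ z + ψ z) ^ q ≤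
      (φ zs + ∑ z ∈ Λ, ψ z) ^ q + ∑ z ∈ Λ.erase zs, (φ z) ^ q := by
  have hinc := (convexOn_rpow hq).sum_map_add_sub_map_le φ ψ (φ zs) Λ (fun z _ => hφ z)
    (fun z _ => hψ z) hmax
  rw [Finset.sum_sub_distrib, ← Finset.add_sum_erase Λ (fun z => φ z ^ q) hzs] at hinc
  linarith
end

section
/- Let n > m ≥ 0 be integers, Ω_{n,m} the set of binary strings of length n+m with exactly n ones, and Ω_{m,n} the set with exactly m ones. Then there exists a bijection φ : Ω_{n,m} → Ω_{m,n} such that for every η ∈ Ω_{n,m}, φ(η)(i) ≤ η(i) for all coordinates i. -/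
/-!
Identify a binary string with the set of positions of its ones. In `α` with `|α| ≤ k + l`,
`k ≤ l`, every `k`-set lies in at most `(|α| - k).choose (l - k) ≤ l.choose k` of the `l`-sets,
while every `l`-set contains exactly `l.choose k` of the `k`-sets, so double counting gives Hall's
condition and hence an injection `S ↦ f S ⊆ S` from `l`-sets to `k`-sets. When `|α| = k + l`
both families have `|α|.choose k` members, so the injection is a bijection.
-/

/-- `OmegaStr N k` is the set of binary strings of length `N` with exactly `k` ones. -/
def OmegaStr (N k : ℕ) : Finset (Fin N → Fin 2) :=
  Finset.univ.filter (fun η => ∑ i, ((η i : ℕ)) = k)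

open Finset Function

section SubsetInjection

variable {α : Type*} [Fintype α] [DecidableEq α] {k l : ℕ}

lemma card_filter_superset_le_choose (s : Finset {S : Finset α // #S = l}) (T : Finset α) :
    #{S ∈ s | T ⊆ S.1} ≤ (Fintype.card α - #T).choose (l - #T) := by
  calc #{S ∈ s | T ⊆ S.1}
      ≤ #(Tᶜ.powersetCard (l - #T)) := by
        refine card_le_card_of_injOn (fun S => S.1 \ T) (fun S hS => ?_) ?_
        · have hTS := (mem_filter.1 hS).2
          refine mem_coe.2 (mem_powersetCard.2 ⟨fun i hi => mem_compl.2 (mem_sdiff.1 hi).2, ?_⟩)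
          rw [card_sdiff_of_subset hTS, S.2]
        · intro S hS S' hS' h
          exact Subtype.ext (superset_injOn_sdiff T (mem_filter.1 hS).2 (mem_filter.1 hS').2 h)
    _ = (Fintype.card α - #T).choose (l - #T) := by rw [card_powersetCard, card_compl]

theorem exists_injective_subset_of_card_le_add (hkl : k ≤ l) (hα : Fintype.card α ≤ k + l) :
    ∃ f : {S : Finset α // #S = l} → {T : Finset α // #T = k},
      Injective f ∧ ∀ S, (f S).1 ⊆ S.1 := by
  let t (S : {S : Finset α // #S = l}) : Finset (Finset α) := S.1.powersetCard k
  suffices hall : ∀ s, #s ≤ #(s.biUnion t) by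
    obtain ⟨f, hf, hft⟩ := (all_card_le_biUnion_card_iff_existsInjective' t).1 hall
    refine ⟨fun S => ⟨f S, (mem_powersetCard.1 (hft S)).2⟩, fun S S' h => hf congr($h.1),
      fun S => (mem_powersetCard.1 (hft S)).1⟩
  intro s
  refine le_of_mul_le_mul_right (card_mul_le_card_mul (fun S T => T ⊆ S.1) (m := l.choose k)
    (n := l.choose k) (fun S hS => ?_) (fun T hT => ?_)) (Nat.choose_pos hkl)
  · calc l.choose k = #(t S) := by rw [card_powersetCard, S.2]
      _ ≤ _ := card_le_card fun T hT => mem_filter.2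
          ⟨mem_biUnion.2 ⟨S, hS, hT⟩, (mem_powersetCard.1 hT).1⟩
  · obtain ⟨S, -, hTS⟩ := mem_biUnion.1 hT
    have hTk : #T = k := (mem_powersetCard.1 hTS).2
    calc _ ≤ (Fintype.card α - #T).choose (l - #T) := card_filter_superset_le_choose s T
      _ ≤ l.choose (l - k) := by rw [hTk]; exact Nat.choose_le_choose _ (by omega)
      _ = l.choose k := Nat.choose_symm hkl

theorem exists_bijective_subset_of_card_eq_add (hkl : k ≤ l) (hα : Fintype.card α = k + l) :
    ∃ f : {S : Finset α // #S = l} → {T : Finset α // #T = k},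
      Bijective f ∧ ∀ S, (f S).1 ⊆ S.1 := by
  obtain ⟨f, hf, hfS⟩ := exists_injective_subset_of_card_le_add hkl hα.le
  refine ⟨f, (Fintype.bijective_iff_injective_and_card f).2 ⟨hf, ?_⟩, hfS⟩
  rw [Fintype.card_finset_len, Fintype.card_finset_len, hα, Nat.choose_symm_add]

end SubsetInjection

lemma Fin.val_two_eq_ite (x : Fin 2) : (x : ℕ) = if x = 1 then 1 else 0 := by
  fin_cases x <;> rfl

lemma mem_omegaStr_iff {N k : ℕ} {η : Fin N → Fin 2} :
    η ∈ OmegaStr N k ↔ #{i | η i = 1} = k := by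
  simp [OmegaStr, Fin.val_two_eq_ite, sum_boole]

def omegaStrEquiv (N k : ℕ) : {η // η ∈ OmegaStr N k} ≃ {S : Finset (Fin N) // #S = k} where
  toFun η := ⟨({i | η.1 i = 1} : Finset (Fin N)), mem_omegaStr_iff.1 η.2⟩
  invFun S := ⟨fun i => if i ∈ S.1 then 1 else 0, mem_omegaStr_iff.2 (by simpa using S.2)⟩
  left_inv η := by
    ext i
    simp only [mem_filter, mem_univ, true_and]
    generalize η.1 i = x
    fin_cases x <;> rfl
  right_inv S := by
    ext
    simp

lemma omegaStrEquiv_symm_apply_le {N k k' : ℕ} {η : {η // η ∈ OmegaStr N k'}}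
    {T : {S : Finset (Fin N) // #S = k}} (hT : T.1 ⊆ (omegaStrEquiv N k' η).1) (i : Fin N) :
    (((omegaStrEquiv N k).symm T).1 i : ℕ) ≤ η.1 i := by
  change ((if i ∈ T.1 then 1 else 0 : Fin 2) : ℕ) ≤ η.1 i
  split_ifs with hi
  · have hη : η.1 i = 1 := by simpa [omegaStrEquiv] using hT hi
    simp [hη]
  · exact Nat.zero_le _

/-- For `n > m`, there is a bijection `φ : Ω_{n,m} → Ω_{m,n}` such that
`φ(η) ≤ η` pointwise for every `η`. -/
theorem stmt3 (n m : ℕ) (h : m < n) :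
    ∃ φ : {η // η ∈ OmegaStr (n + m) n} → {ζ // ζ ∈ OmegaStr (n + m) m},
      Function.Bijective φ ∧
      ∀ η : {η // η ∈ OmegaStr (n + m) n}, ∀ i, ((φ η).1 i : ℕ) ≤ (η.1 i : ℕ) := by
  obtain ⟨f, hf, hfS⟩ := exists_bijective_subset_of_card_eq_add (α := Fin (n + m)) h.le
    (by rw [Fintype.card_fin, add_comm])
  let e := omegaStrEquiv (n + m)
  exact ⟨(e m).symm ∘ f ∘ e n, (e m).symm.bijective.comp (hf.comp (e n).bijective),
    fun η => omegaStrEquiv_symm_apply_le (hfS _)⟩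
end

section
/- Let Λ be a finite subset of ℤ^d and L a positive integer. Then there exists a partition of Λ into nonempty blocks ('L-clusters') such that any two distinct blocks C, C' satisfy dist(C, C') ≥ 4·max(diam(C), diam(C'), L), where dist and diam are taken with respect to the ℓ¹ norm. Moreover every block C satisfies diam(C) ≤ (5|Λ|)^{|Λ|} · L. -/
/-- ℓ¹ norm of a point of `ℤ^d`, as a natural number. -/
def l1norm {d : ℕ} (x : Fin d → ℤ) : ℕ := ∑ i, (x i).natAbs

/-- ℓ¹ diameter of a finite subset of `ℤ^d`. -/
def l1diam {d : ℕ} (C : Finset (Fin d → ℤ)) : ℕ :=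
  C.sup fun x => C.sup fun y => l1norm (x - y)

/-!
Start from the partition of `Λ` into singletons and, as long as two blocks `C, C'` are closer
than `4 max(diam C, diam C', L)`, merge them. The merged block has
`diam (C ∪ C') + L ≤ 6 max(diam C + L, diam C' + L)`, so the invariant
`6 ^ #P * (diam C + L) ≤ 6 ^ |Λ| * L` survives every merge. Each merge lowers the number of
blocks, so the process stops at a separated partition, and the invariant with `#P ≥ 1` gives
`diam C ≤ 6 ^ (|Λ| - 1) * L ≤ (5|Λ|) ^ |Λ| * L`.
-/

open Finset

section Partition

variable {α : Type*} [DecidableEq α]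

structure IsPartition (P : Finset (Finset α)) (Λ : Finset α) : Prop where
  nonempty : ∀ C ∈ P, C.Nonempty
  disjoint : ∀ C ∈ P, ∀ C' ∈ P, C ≠ C' → Disjoint C C'
  biUnion_eq : P.biUnion id = Λ

theorem isPartition_singletons (Λ : Finset α) :
    IsPartition (Λ.image ({·} : α → Finset α)) Λ where
  nonempty := by simp
  disjoint := by
    simp only [mem_image]
    rintro _ ⟨x, -, rfl⟩ _ ⟨y, -, rfl⟩ hxy
    exact disjoint_singleton.2 fun h => hxy (h ▸ rfl)
  biUnion_eq := by ext; simp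

def mergeBlocks (P : Finset (Finset α)) (C C' : Finset α) : Finset (Finset α) :=
  insert (C ∪ C') ((P.erase C).erase C')

theorem mem_mergeBlocks {P : Finset (Finset α)} {C C' B : Finset α} :
    B ∈ mergeBlocks P C C' ↔ B = C ∪ C' ∨ (B ∈ P ∧ B ≠ C ∧ B ≠ C') := by
  simp only [mergeBlocks, mem_insert, mem_erase]
  tauto

namespace IsPartition

variable {P : Finset (Finset α)} {Λ C C' : Finset α}

theorem union_notMem_erase (h : IsPartition P Λ) (hC : C ∈ P) :
    C ∪ C' ∉ (P.erase C).erase C' := by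
  intro hmem
  obtain ⟨x, hx⟩ := h.nonempty C hC
  simp only [mem_erase] at hmem
  exact disjoint_left.1 (h.disjoint _ hmem.2.2 _ hC hmem.2.1) (mem_union_left _ hx) hx

theorem card_mergeBlocks (h : IsPartition P Λ) (hC : C ∈ P) (hC' : C' ∈ P) (hne : C ≠ C') :
    (mergeBlocks P C C').card + 1 = P.card := by
  have hC'e : C' ∈ P.erase C := mem_erase.2 ⟨hne.symm, hC'⟩
  rw [mergeBlocks, card_insert_of_notMem (h.union_notMem_erase hC), card_erase_add_one hC'e,
    card_erase_add_one hC]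

theorem merge (h : IsPartition P Λ) (hC : C ∈ P) (hC' : C' ∈ P) :
    IsPartition (mergeBlocks P C C') Λ where
  nonempty B hB := by
    rcases mem_mergeBlocks.1 hB with rfl | ⟨hB, -⟩
    · exact (h.nonempty C hC).mono subset_union_left
    · exact h.nonempty B hB
  disjoint A hA B hB hAB := by
    rcases mem_mergeBlocks.1 hA with rfl | ⟨hA, hAC, hAC'⟩ <;>
      rcases mem_mergeBlocks.1 hB with rfl | ⟨hB, hBC, hBC'⟩
    · exact absurd rfl hAB
    · exact disjoint_union_left.2
        ⟨h.disjoint _ hC _ hB hBC.symm, h.disjoint _ hC' _ hB hBC'.symm⟩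
    · exact disjoint_union_right.2 ⟨h.disjoint _ hA _ hC hAC, h.disjoint _ hA _ hC' hAC'⟩
    · exact h.disjoint _ hA _ hB hAB
  biUnion_eq := by
    rw [← h.biUnion_eq]
    ext a
    simp only [mem_biUnion, mem_mergeBlocks, id]
    constructor
    · rintro ⟨B, rfl | ⟨hB, -⟩, ha⟩
      · exact (mem_union.1 ha).elim (fun ha => ⟨C, hC, ha⟩) fun ha => ⟨C', hC', ha⟩
      · exact ⟨B, hB, ha⟩
    · rintro ⟨B, hB, ha⟩
      by_cases hBC : B = C
      · exact ⟨C ∪ C', Or.inl rfl, mem_union_left _ (hBC ▸ ha)⟩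
      by_cases hBC' : B = C'
      · exact ⟨C ∪ C', Or.inl rfl, mem_union_right _ (hBC' ▸ ha)⟩
      exact ⟨B, Or.inr ⟨hB, hBC, hBC'⟩, ha⟩

end IsPartition

end Partition

section L1

variable {d : ℕ}

theorem l1norm_sub_comm (x y : Fin d → ℤ) : l1norm (x - y) = l1norm (y - x) := by
  simp only [l1norm, Pi.sub_apply, ← Int.natAbs_neg (x _ - y _), neg_sub]

theorem l1norm_sub_le (x y z : Fin d → ℤ) :
    l1norm (x - z) ≤ l1norm (x - y) + l1norm (y - z) := by
  rw [l1norm, l1norm, l1norm, ← sum_add_distrib]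
  refine sum_le_sum fun i _ => ?_
  simpa only [Pi.sub_apply, sub_add_sub_cancel] using Int.natAbs_add_le (x i - y i) (y i - z i)

theorem l1norm_sub_le_l1diam {C : Finset (Fin d → ℤ)} {x y : Fin d → ℤ}
    (hx : x ∈ C) (hy : y ∈ C) :
    l1norm (x - y) ≤ l1diam C :=
  (le_sup (f := fun y => l1norm (x - y)) hy).trans
    (le_sup (f := fun x => C.sup fun y => l1norm (x - y)) hx)

theorem l1diam_le {C : Finset (Fin d → ℤ)} {m : ℕ}
    (h : ∀ x ∈ C, ∀ y ∈ C, l1norm (x - y) ≤ m) : l1diam C ≤ m :=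
  Finset.sup_le fun x hx => Finset.sup_le fun y hy => h x hx y hy

theorem l1diam_singleton (x : Fin d → ℤ) : l1diam {x} = 0 := by
  simp [l1diam, l1norm]

theorem l1norm_sub_le_of_mem {C C' : Finset (Fin d → ℤ)} {x y p q : Fin d → ℤ}
    (hx : x ∈ C) (hy : y ∈ C') (hp : p ∈ C) (hq : q ∈ C') :
    l1norm (p - q) ≤ l1diam C + l1norm (x - y) + l1diam C' :=
  calc l1norm (p - q) ≤ l1norm (p - x) + (l1norm (x - y) + l1norm (y - q)) :=
        (l1norm_sub_le p x q).trans (Nat.add_le_add_left (l1norm_sub_le x y q) _)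
    _ ≤ l1diam C + (l1norm (x - y) + l1diam C') := by
        gcongr
        exacts [l1norm_sub_le_l1diam hp hx, l1norm_sub_le_l1diam hy hq]
    _ = l1diam C + l1norm (x - y) + l1diam C' := (add_assoc ..).symm

theorem l1diam_union_le {C C' : Finset (Fin d → ℤ)} {x y : Fin d → ℤ}
    (hx : x ∈ C) (hy : y ∈ C') :
    l1diam (C ∪ C') ≤ l1diam C + l1norm (x - y) + l1diam C' := by
  refine l1diam_le fun p hp q hq => ?_
  rcases mem_union.1 hp with hp | hp <;> rcases mem_union.1 hq with hq | hq
  · exact (l1norm_sub_le_l1diam hp hq).trans (by omega)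
  · exact l1norm_sub_le_of_mem hx hy hp hq
  · exact l1norm_sub_comm p q ▸ l1norm_sub_le_of_mem hx hy hq hp
  · exact (l1norm_sub_le_l1diam hp hq).trans (by omega)

theorem l1diam_union_add_le {C C' : Finset (Fin d → ℤ)} {x y : Fin d → ℤ} {L : ℕ}
    (hx : x ∈ C) (hy : y ∈ C')
    (hxy : l1norm (x - y) ≤ 4 * max (max (l1diam C) (l1diam C')) L) :
    l1diam (C ∪ C') + L ≤ 6 * max (l1diam C + L) (l1diam C' + L) := by
  have := l1diam_union_le hx hy
  omega

end L1

section Clustering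

variable {d : ℕ}

def SeparatedBlocks (L : ℕ) (P : Finset (Finset (Fin d → ℤ))) : Prop :=
  ∀ C ∈ P, ∀ C' ∈ P, C ≠ C' →
    ∀ x ∈ C, ∀ y ∈ C', 4 * max (max (l1diam C) (l1diam C')) L ≤ l1norm (x - y)

theorem IsPartition.pow_mul_l1diam_mergeBlocks_le {Λ C C' : Finset (Fin d → ℤ)}
    {P : Finset (Finset (Fin d → ℤ))} {x y : Fin d → ℤ} {L K : ℕ} (hP : IsPartition P Λ)
    (hC : C ∈ P) (hC' : C' ∈ P) (hne : C ≠ C') (hx : x ∈ C) (hy : y ∈ C')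
    (hxy : l1norm (x - y) ≤ 4 * max (max (l1diam C) (l1diam C')) L)
    (hdiam : ∀ B ∈ P, 6 ^ P.card * (l1diam B + L) ≤ K) :
    ∀ B ∈ mergeBlocks P C C', 6 ^ (mergeBlocks P C C').card * (l1diam B + L) ≤ K := by
  have hpow : 6 ^ P.card = 6 ^ (mergeBlocks P C C').card * 6 := by
    rw [← hP.card_mergeBlocks hC hC' hne, pow_succ]
  intro B hB
  rcases mem_mergeBlocks.1 hB with rfl | ⟨hB, -⟩
  · have hmax : 6 ^ P.card * max (l1diam C + L) (l1diam C' + L) ≤ K :=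
      max_rec' (fun m => 6 ^ P.card * m ≤ K) (hdiam C hC) (hdiam C' hC')
    calc 6 ^ (mergeBlocks P C C').card * (l1diam (C ∪ C') + L)
        ≤ 6 ^ (mergeBlocks P C C').card * (6 * max (l1diam C + L) (l1diam C' + L)) :=
          Nat.mul_le_mul_left _ (l1diam_union_add_le hx hy hxy)
      _ ≤ K := by rwa [← mul_assoc, ← hpow]
  · refine le_trans ?_ (hdiam B hB)
    rw [hpow]
    gcongr
    omega

theorem IsPartition.exists_separatedBlocks {Λ : Finset (Fin d → ℤ)}
    {P : Finset (Finset (Fin d → ℤ))} {L K : ℕ} (hP : IsPartition P Λ)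
    (hdiam : ∀ C ∈ P, 6 ^ P.card * (l1diam C + L) ≤ K) :
    ∃ Q, IsPartition Q Λ ∧ SeparatedBlocks L Q ∧
      ∀ C ∈ Q, 6 ^ Q.card * (l1diam C + L) ≤ K := by
  induction hk : P.card using Nat.strong_induction_on generalizing P with
  | _ k ih =>
    by_cases hsep : SeparatedBlocks L P
    · exact ⟨P, hP, hsep, hdiam⟩
    simp only [SeparatedBlocks, not_forall, not_le] at hsep
    obtain ⟨C, hC, C', hC', hne, x, hx, y, hy, hxy⟩ := hsep
    exact ih _ (hk ▸ hP.card_mergeBlocks hC hC' hne ▸ Nat.lt_succ_self _) (hP.merge hC hC')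
      (hP.pow_mul_l1diam_mergeBlocks_le hC hC' hne hx hy hxy.le hdiam) rfl

end Clustering

theorem six_pow_le_six_mul_pow (n : ℕ) : 6 ^ n ≤ 6 * (5 * n) ^ n := by
  rcases Nat.lt_or_ge n 2 with hn | hn
  · interval_cases n <;> norm_num
  calc 6 ^ n ≤ (5 * n) ^ n := Nat.pow_le_pow_left (by omega) n
    _ ≤ 6 * (5 * n) ^ n := Nat.le_mul_of_pos_left _ (by norm_num)

theorem stmt5_general (d L : ℕ) (Λ : Finset (Fin d → ℤ)) :
    ∃ P : Finset (Finset (Fin d → ℤ)),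
      (∀ C ∈ P, C.Nonempty) ∧
      (∀ C ∈ P, ∀ C' ∈ P, C ≠ C' → Disjoint C C') ∧
      (P.biUnion id = Λ) ∧
      (∀ C ∈ P, ∀ C' ∈ P, C ≠ C' →
        ∀ x ∈ C, ∀ y ∈ C',
          4 * max (max (l1diam C) (l1diam C')) L ≤ l1norm (x - y)) ∧
      (∀ C ∈ P, l1diam C ≤ (5 * Λ.card) ^ Λ.card * L) := by
  obtain ⟨Q, hQ, hsep, hdiam⟩ := (isPartition_singletons Λ).exists_separatedBlocks
    (L := L) (K := 6 ^ Λ.card * L)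
    (by simp [card_image_of_injective _ singleton_injective, l1diam_singleton])
  refine ⟨Q, hQ.nonempty, hQ.disjoint, hQ.biUnion_eq, hsep, fun C hC => ?_⟩
  have hQ1 : 6 ^ 1 ≤ 6 ^ Q.card := Nat.pow_le_pow_right (by norm_num) (card_pos.2 ⟨C, hC⟩)
  have : 6 * (l1diam C + L) ≤ 6 * ((5 * Λ.card) ^ Λ.card * L) :=
    calc 6 * (l1diam C + L) ≤ 6 ^ Q.card * (l1diam C + L) := Nat.mul_le_mul_right _ hQ1
      _ ≤ 6 ^ Λ.card * L := hdiam C hC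
      _ ≤ 6 * (5 * Λ.card) ^ Λ.card * L := Nat.mul_le_mul_right _ (six_pow_le_six_mul_pow _)
      _ = 6 * ((5 * Λ.card) ^ Λ.card * L) := mul_assoc ..
  omega

/-- Existence of a partition of a finite set `Λ ⊆ ℤ^d` into `L`-clusters:
distinct blocks `C, C'` satisfy `dist(C, C') ≥ 4 max(diam C, diam C', L)`, and
every block `C` satisfies `diam C ≤ (5|Λ|)^{|Λ|} L`. -/
theorem stmt5 (d L : ℕ) (hL : 0 < L) (Λ : Finset (Fin d → ℤ)) :
    ∃ P : Finset (Finset (Fin d → ℤ)),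
      (∀ C ∈ P, C.Nonempty) ∧
      (∀ C ∈ P, ∀ C' ∈ P, C ≠ C' → Disjoint C C') ∧
      (P.biUnion id = Λ) ∧
      (∀ C ∈ P, ∀ C' ∈ P, C ≠ C' →
        ∀ x ∈ C, ∀ y ∈ C',
          4 * max (max (l1diam C) (l1diam C')) L ≤ l1norm (x - y)) ∧
      (∀ C ∈ P, l1diam C ≤ (5 * Λ.card) ^ Λ.card * L) :=
  stmt5_general d L Λ
end
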